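/- Let h : ℕ → ℕ be strictly increasing with h(i) ≥ 1 and satisfying P_n^(2(n+2)(h(n)+1)^3) < h(n+1) for all n. Then the real number α = Σ_{i=0}^∞ P_i^(-h(i)) is irrational. -/

import Mathlib

/-!
If `α = ∑ 1/bᵢ` with `bᵢ = P_i ^ h(i)` were rational with denominator `D`, multiply by
`D · b₀ ⋯ b_D`: the head of the series becomes an integer, so the tail
`D · b₀ ⋯ b_D · ∑_{i > D} 1/bᵢ` would be a positive integer. Since `bᵢ₊₁ ≥ 2 bᵢ`, that tail is at
most `2 D · b₀ ⋯ b_D / b_{D+1}`, and the growth condition makes `b_{D+1}` exceed `2 D · b₀ ⋯ b_D`.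
-/

/-- `P i` is the `i`-th prime number (`P 0 = 2`). -/
noncomputable def P (i : ℕ) : ℕ := Nat.nth Nat.Prime i

open Finset

theorem irrational_of_forall_exists_int_approx {x : ℝ}
    (hx : ∀ D : ℕ, ∃ Q m : ℤ, 0 < Q * x - m ∧ D * (Q * x - m) < 1) : Irrational x := by
  rintro ⟨q, rfl⟩
  obtain ⟨Q, m, hpos, hlt⟩ := hx q.den
  have hz : (q.den : ℝ) * (Q * q - m) = ((Q * q.num - m * q.den : ℤ) : ℝ) := by
    push_cast
    rw [Rat.cast_def]
    field_simp
  have hz_pos : 0 < Q * q.num - m * q.den := by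
    have := mul_pos (Nat.cast_pos.mpr q.den_pos) hpos
    exact_mod_cast hz ▸ this
  have hz_lt : Q * q.num - m * q.den < 1 := by exact_mod_cast hz ▸ hlt
  omega

theorem prod_mul_sum_inv_eq_sum_prod_erase {ι K : Type*} [DecidableEq ι] [Field K]
    (s : Finset ι) {b : ι → K} (hb : ∀ i ∈ s, b i ≠ 0) :
    (∏ i ∈ s, b i) * ∑ i ∈ s, (b i)⁻¹ = ∑ i ∈ s, ∏ j ∈ s.erase i, b j := by
  rw [mul_sum]
  refine sum_congr rfl fun i hi => ?_
  rw [← prod_erase_mul s b hi, mul_inv_cancel_right₀ (hb i hi)]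

section HalvingSequence

variable {a : ℕ → ℝ}

theorem le_half_pow_mul_of_two_mul_le (ha : ∀ i, 2 * a (i + 1) ≤ a i) (k i : ℕ) :
    a (i + k) ≤ (1 / 2) ^ i * a k := by
  induction i with
  | zero => simp
  | succ i ih =>
    have := ha (i + k)
    rw [pow_succ, Nat.add_right_comm]
    linarith

theorem summable_of_two_mul_le (h0 : ∀ i, 0 ≤ a i) (ha : ∀ i, 2 * a (i + 1) ≤ a i) :
    Summable a :=
  (summable_geometric_two.mul_right (a 0)).of_nonneg_of_le h0 fun i =>
    le_half_pow_mul_of_two_mul_le ha 0 i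

theorem tsum_nat_add_le_two_mul (h0 : ∀ i, 0 ≤ a i) (ha : ∀ i, 2 * a (i + 1) ≤ a i) (k : ℕ) :
    ∑' i, a (i + k) ≤ 2 * a k := by
  calc ∑' i, a (i + k) ≤ ∑' i : ℕ, (1 / 2 : ℝ) ^ i * a k :=
        ((summable_nat_add_iff k).mpr (summable_of_two_mul_le h0 ha)).tsum_le_tsum
          (le_half_pow_mul_of_two_mul_le ha k) (summable_geometric_two.mul_right _)
    _ = 2 * a k := by rw [tsum_mul_right, tsum_geometric_two]

end HalvingSequence

theorem two_mul_inv_le_inv_of_two_mul_le {x y : ℝ} (hx : 0 < x) (h : 2 * x ≤ y) :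
    2 * y⁻¹ ≤ x⁻¹ := by
  rw [← div_eq_mul_inv, inv_eq_one_div, div_le_div_iff₀ (by linarith) hx]
  linarith

theorem irrational_tsum_inv_of_growth {b : ℕ → ℕ} (hb : ∀ i, 0 < b i)
    (hdouble : ∀ i, 2 * b i ≤ b (i + 1))
    (hgrowth : ∀ n, n * (∏ i ∈ range (n + 1), b i) * 2 < b (n + 1)) :
    Irrational (∑' i, (b i : ℝ)⁻¹) := by
  have h0 : ∀ i, 0 ≤ (b i : ℝ)⁻¹ := fun i => by positivity
  have hhalf : ∀ i, 2 * (b (i + 1) : ℝ)⁻¹ ≤ (b i : ℝ)⁻¹ := fun i =>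
    two_mul_inv_le_inv_of_two_mul_le (by exact_mod_cast hb i) (by exact_mod_cast hdouble i)
  refine irrational_of_forall_exists_int_approx fun D => ?_
  have hQ_pos : (0 : ℝ) < ∏ i ∈ range (D + 1), (b i : ℝ) := prod_pos fun i _ => by
    exact_mod_cast hb i
  refine ⟨∏ i ∈ range (D + 1), (b i : ℤ),
    ∑ i ∈ range (D + 1), ∏ j ∈ (range (D + 1)).erase i, (b j : ℤ), ?_⟩
  have hsplit : (∏ i ∈ range (D + 1), (b i : ℝ)) * ∑' i, (b i : ℝ)⁻¹
      - ∑ i ∈ range (D + 1), ∏ j ∈ (range (D + 1)).erase i, (b j : ℝ)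
      = (∏ i ∈ range (D + 1), (b i : ℝ)) * ∑' i, (b (i + (D + 1)) : ℝ)⁻¹ := by
    rw [← (summable_of_two_mul_le h0 hhalf).sum_add_tsum_nat_add (D + 1), mul_add,
      prod_mul_sum_inv_eq_sum_prod_erase _ fun i _ => by exact_mod_cast (hb i).ne']
    ring
  push_cast
  rw [hsplit]
  have htail_pos : 0 < ∑' i, (b (i + (D + 1)) : ℝ)⁻¹ :=
    ((summable_nat_add_iff (D + 1)).mpr (summable_of_two_mul_le h0 hhalf)).tsum_pos
      (fun i => h0 _) 0 (by have := hb (0 + (D + 1)); positivity)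
  refine ⟨mul_pos hQ_pos htail_pos, ?_⟩
  have hgrowth' : (D : ℝ) * (∏ i ∈ range (D + 1), (b i : ℝ)) * 2 < b (D + 1) := by
    exact_mod_cast hgrowth D
  have := hb (D + 1)
  calc (D : ℝ) * ((∏ i ∈ range (D + 1), (b i : ℝ)) * ∑' i, (b (i + (D + 1)) : ℝ)⁻¹)
      ≤ D * (∏ i ∈ range (D + 1), (b i : ℝ)) * (2 * (b (D + 1) : ℝ)⁻¹) := by
        rw [← mul_assoc]
        gcongr
        exact tsum_nat_add_le_two_mul h0 hhalf (D + 1)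
    _ < 1 := by
        rw [← mul_assoc, ← div_eq_mul_inv, div_lt_one (by positivity)]
        exact hgrowth'

theorem P_strictMono : StrictMono P := Nat.nth_strictMono Nat.infinite_setOfPred_prime

theorem P_prime (i : ℕ) : (P i).Prime := Nat.prime_nth_prime i

theorem two_le_P (i : ℕ) : 2 ≤ P i := (P_prime i).two_le

section Exponents

variable {h : ℕ → ℕ}

theorem two_mul_P_pow_le (hmono : StrictMono h) (i : ℕ) :
    2 * P i ^ h i ≤ P (i + 1) ^ h (i + 1) :=
  calc 2 * P i ^ h i ≤ P (i + 1) * P (i + 1) ^ h i := by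
        gcongr
        · exact two_le_P _
        · exact P_strictMono.monotone (Nat.le_succ i)
    _ = P (i + 1) ^ (h i + 1) := by ring
    _ ≤ P (i + 1) ^ h (i + 1) := Nat.pow_le_pow_right (P_prime _).pos (hmono (Nat.lt_succ_self i))

theorem prod_P_pow_le (hmono : Monotone h) (n : ℕ) :
    ∏ i ∈ range (n + 1), P i ^ h i ≤ P n ^ ((n + 1) * h n) := by
  calc ∏ i ∈ range (n + 1), P i ^ h i ≤ ∏ _i ∈ range (n + 1), P n ^ h n :=
        prod_le_prod' fun i hi => by
          have hin : i ≤ n := Nat.lt_succ_iff.mp (mem_range.mp hi)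
          calc P i ^ h i ≤ P n ^ h i := Nat.pow_le_pow_left (P_strictMono.monotone hin) _
            _ ≤ P n ^ h n := Nat.pow_le_pow_right (P_prime n).pos (hmono hin)
    _ = P n ^ ((n + 1) * h n) := by rw [prod_const, card_range, ← pow_mul']

theorem mul_prod_P_pow_lt (hmono : StrictMono h)
    (hgrow : ∀ n, P n ^ (2 * (n + 2) * (h n + 1) ^ 3) < h (n + 1)) (n : ℕ) :
    n * (∏ i ∈ range (n + 1), P i ^ h i) * 2 < P (n + 1) ^ h (n + 1) := by
  have hp := two_le_P n
  have hexp : (n + 1) * (h n + 1) ≤ 2 * (n + 2) * (h n + 1) ^ 3 := by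
    have : h n + 1 ≤ (h n + 1) ^ 3 := Nat.le_self_pow (by norm_num) _
    calc (n + 1) * (h n + 1) ≤ 2 * (n + 2) * (h n + 1) := by nlinarith
      _ ≤ _ := Nat.mul_le_mul_left _ this
  calc n * (∏ i ∈ range (n + 1), P i ^ h i) * 2
      ≤ P n ^ n * P n ^ ((n + 1) * h n) * P n := by
        gcongr
        · exact (Nat.lt_pow_self hp).le
        · exact prod_P_pow_le hmono.monotone n
    _ = P n ^ ((n + 1) * (h n + 1)) := by ring
    _ ≤ P n ^ (2 * (n + 2) * (h n + 1) ^ 3) := Nat.pow_le_pow_right (by omega) hexp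
    _ < h (n + 1) := hgrow n
    _ < P (n + 1) ^ h (n + 1) := Nat.lt_pow_self (two_le_P _)

end Exponents

theorem alpha_irrational_general
    (h : ℕ → ℕ) (hmono : StrictMono h)
    (hgrow : ∀ n, P n ^ (2 * (n + 2) * (h n + 1) ^ 3) < h (n + 1)) :
    Irrational (∑' i : ℕ, (P i : ℝ) ^ (-(h i : ℤ))) := by
  have hterm : ∀ i, (P i : ℝ) ^ (-(h i : ℤ)) = ((P i ^ h i : ℕ) : ℝ)⁻¹ := fun i => by
    rw [zpow_neg, zpow_natCast, Nat.cast_pow]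
  rw [tsum_congr hterm]
  exact irrational_tsum_inv_of_growth (fun i => pow_pos (P_prime i).pos _)
    (two_mul_P_pow_le hmono) (mul_prod_P_pow_lt hmono hgrow)

theorem alpha_irrational
    (h : ℕ → ℕ) (hmono : StrictMono h) (hpos : ∀ i, 1 ≤ h i)
    (hgrow : ∀ n, P n ^ (2 * (n + 2) * (h n + 1) ^ 3) < h (n + 1)) :
    Irrational (∑' i : ℕ, (P i : ℝ) ^ (-(h i : ℤ))) :=
  alpha_irrational_general h hmono hgrow
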